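/- Let U be a bounded subset of ℂ and let 0 < γ < π/2. Then there exists a constant C' > 0 such that for all ẑ ∈ U and all z ∈ ℂ with z ≠ 0 and |Arg(z)| < γ, one has Im(R̂(ẑ,z)) ≥ Im(z) − C', where R̂(ẑ,z) := (ẑ + z²)^{1/2}. -/

import Mathlib

/-!
Write `R = R̂(ẑ,z)`. Since `(R - z)(R + z) = ẑ` and `Re R ≥ 0`, we get
`‖R - z‖ · Re z ≤ ‖R - z‖ · ‖R + z‖ = ‖ẑ‖`, while in the sector `|Arg z| < γ` we have
`Re z ≥ cos γ · ‖z‖`. Hence `‖R - z‖ ≤ ‖ẑ‖ / cos γ` once `‖z‖ ≥ 1`; for `‖z‖ ≤ 1` the crude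
bound `‖R‖² = ‖ẑ + z²‖ ≤ ‖ẑ‖ + 1` suffices. Either way `Im z - Im R ≤ ‖R - z‖` is bounded
uniformly on the bounded set `U`.
-/

open Complex Real

noncomputable def Rhat (zhat z : ℂ) : ℂ := (zhat + z ^ 2) ^ ((1 : ℂ) / 2)

lemma Rhat_re_nonneg (zhat z : ℂ) : 0 ≤ (Rhat zhat z).re := by
  rw [Rhat, one_div, Complex.cpow_inv_two_re]
  exact Real.sqrt_nonneg _

lemma Rhat_sq (zhat z : ℂ) : Rhat zhat z ^ 2 = zhat + z ^ 2 := by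
  rw [Rhat, one_div]
  exact Complex.cpow_ofNat_inv_pow _ 2

lemma cos_mul_norm_le_re {z : ℂ} {γ : ℝ} (hγ : γ ≤ π) (harg : |z.arg| ≤ γ) :
    Real.cos γ * ‖z‖ ≤ z.re := by
  have hcos : Real.cos γ ≤ Real.cos z.arg := by
    rw [← Real.cos_abs z.arg]
    exact Real.cos_le_cos_of_nonneg_of_le_pi (abs_nonneg _) hγ harg
  calc Real.cos γ * ‖z‖ ≤ Real.cos z.arg * ‖z‖ := by gcongr
    _ = z.re := by rw [mul_comm, Complex.norm_mul_cos_arg]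

section SquareRootPerturbation

variable {w z a : ℂ}

lemma norm_sub_mul_re_le (hw : w ^ 2 = a + z ^ 2) (hw_re : 0 ≤ w.re) :
    ‖w - z‖ * z.re ≤ ‖a‖ := by
  have hprod : ‖w - z‖ * ‖w + z‖ = ‖a‖ := by
    rw [← norm_mul, show (w - z) * (w + z) = w ^ 2 - z ^ 2 by ring, hw, add_sub_cancel_right]
  have hre : z.re ≤ ‖w + z‖ := by
    linarith [Complex.re_le_norm (w + z), Complex.add_re w z]
  calc ‖w - z‖ * z.re ≤ ‖w - z‖ * ‖w + z‖ := by gcongr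
    _ = ‖a‖ := hprod

lemma norm_sub_le_of_norm_le_one (hw : w ^ 2 = a + z ^ 2) (hz : ‖z‖ ≤ 1) :
    ‖w - z‖ ≤ ‖a‖ + 2 := by
  have hw_sq : ‖w‖ ^ 2 ≤ ‖a‖ + 1 := by
    rw [← norm_pow, hw]
    calc ‖a + z ^ 2‖ ≤ ‖a‖ + ‖z‖ ^ 2 := (norm_add_le _ _).trans_eq (by rw [norm_pow])
      _ ≤ ‖a‖ + 1 := by gcongr; exact pow_le_one₀ (norm_nonneg z) hz
  have hw_norm : ‖w‖ ≤ ‖a‖ + 1 := by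
    nlinarith [norm_nonneg a, norm_nonneg w]
  linarith [norm_sub_le w z]

lemma norm_sub_le_of_cos_mul_norm_le_re {c : ℝ} (hc : 0 < c) (hw : w ^ 2 = a + z ^ 2)
    (hw_re : 0 ≤ w.re) (hz_re : c * ‖z‖ ≤ z.re) :
    ‖w - z‖ ≤ ‖a‖ / c + ‖a‖ + 2 := by
  rcases le_total ‖z‖ 1 with hz | hz
  · linarith [norm_sub_le_of_norm_le_one hw hz, div_nonneg (norm_nonneg a) hc.le]
  · have key : ‖w - z‖ * c ≤ ‖a‖ := by
      calc ‖w - z‖ * c ≤ ‖w - z‖ * z.re := by gcongr; nlinarith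
        _ ≤ ‖a‖ := norm_sub_mul_re_le hw hw_re
    have : ‖w - z‖ ≤ ‖a‖ / c := by rwa [le_div_iff₀ hc]
    linarith [norm_nonneg a]

end SquareRootPerturbation

/-- If `U ⊂ ℂ` is bounded and `0 < γ < π/2`, there exists `C' > 0` such that, for all
`ẑ ∈ U` and all `z ∈ ℂ` with `z ≠ 0` and `|Arg z| < γ`, `Im(R̂(ẑ,z)) ≥ Im(z) − C'`. -/
theorem stmt_5 (U : Set ℂ) (hU : Bornology.IsBounded U) (γ : ℝ)
    (hγ₀ : 0 < γ) (hγ₁ : γ < π / 2) :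
    ∃ C' > (0 : ℝ), ∀ zhat ∈ U, ∀ z : ℂ, z ≠ 0 → |z.arg| < γ →
      z.im - C' ≤ (Rhat zhat z).im := by
  obtain ⟨M, hM⟩ := hU.exists_norm_le
  have hc : 0 < Real.cos γ := Real.cos_pos_of_mem_Ioo ⟨by linarith [Real.pi_pos], hγ₁⟩
  refine ⟨max M 0 / Real.cos γ + max M 0 + 2, by positivity, ?_⟩
  intro zhat hzhat z _ harg
  have hbound := norm_sub_le_of_cos_mul_norm_le_re hc (Rhat_sq zhat z) (Rhat_re_nonneg zhat z)
    (cos_mul_norm_le_re (by linarith [Real.pi_pos]) harg.le)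
  have hzhat_le : ‖zhat‖ ≤ max M 0 := (hM zhat hzhat).trans (le_max_left M 0)
  have hdiv : ‖zhat‖ / Real.cos γ ≤ max M 0 / Real.cos γ := by gcongr
  have him : z.im - (Rhat zhat z).im ≤ ‖Rhat zhat z - z‖ := by
    rw [norm_sub_rev, ← Complex.sub_im]
    exact Complex.im_le_norm _
  linarith
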